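/- arXiv:math/0102228 — 6 statements merged into one kernel-verified Lean document; each statement's English description precedes it below -/
import Mathlib

section
/- Let F be a field of characteristic not 2, let T be a commutative local F-algebra with maximal ideal M and residue field K = T/M. Let a₁, ..., aₛ be units of T. Then the T-algebra S = T[x₁,...,xₛ]/(x₁² - a₁, ..., xₛ² - aₛ) is a semilocal ring, and its Jacobson radical is M·S. -/
/-!
Each generator `x` of `S` satisfies `x² = a`, so `S` is finite over `T`; differentiating gives
`2x · dx = 0` with `2x` a unit, so `Ω[S⁄T] = 0` and `S` is unramified over `T`. Over a local ring,
every maximal ideal of a finite algebra lies over `M`; only finitely many primes do, and the maximal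
ideals of `S` are exactly those containing `M·S`. Unramifiedness makes `S ⧸ M·S` a reduced
finite-dimensional algebra over the field `T ⧸ M`, hence an Artinian ring with zero nilradical,
i.e. zero Jacobson radical. Therefore `Jac(S) = M·S`.
-/

open MvPolynomial

namespace IsLocalRing

variable {R S : Type*} [CommRing R] [IsLocalRing R] [CommRing S] [Algebra R S]

theorem map_maximalIdeal_le_of_isMaximal [Algebra.IsIntegral R S] (J : Ideal S) [J.IsMaximal] :
    (maximalIdeal R).map (algebraMap R S) ≤ J :=
  Ideal.map_le_iff_le_comap.mpr
    (eq_maximalIdeal (Ideal.isMaximal_comap_of_isIntegral_of_isMaximal J)).ge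

theorem finite_maximalSpectrum_of_finite [Module.Finite R S] : Finite (MaximalSpectrum S) :=
  have : Finite ((maximalIdeal R).primesOver S) :=
    (Algebra.QuasiFinite.finite_primesOver (maximalIdeal R)).to_subtype
  Finite.of_injective
    (fun J : MaximalSpectrum S ↦ (⟨J.asIdeal, J.isMaximal.isPrime,
      ⟨(eq_maximalIdeal (Ideal.isMaximal_comap_of_isIntegral_of_isMaximal J.asIdeal)).symm⟩⟩ :
        (maximalIdeal R).primesOver S))
    fun _ _ h ↦ MaximalSpectrum.ext (congrArg Subtype.val h)

attribute [local instance] Ideal.Quotient.field in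
theorem jacobson_bot_eq_map_maximalIdeal [Module.Finite R S] [Algebra.FormallyUnramified R S] :
    (⊥ : Ideal S).jacobson = (maximalIdeal R).map (algebraMap R S) := by
  set mS := (maximalIdeal R).map (algebraMap R S)
  have hmS : mS ≤ (⊥ : Ideal S).jacobson :=
    le_sInf fun J hJ ↦ have := hJ.2; map_maximalIdeal_le_of_isMaximal J
  have : Module.Finite (R ⧸ maximalIdeal R) (S ⧸ mS) :=
    Module.Finite.of_restrictScalars_finite R _ _
  have : IsArtinianRing (S ⧸ mS) := IsArtinianRing.of_finite (R ⧸ maximalIdeal R) _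
  have : IsReduced (S ⧸ mS) :=
    Algebra.FormallyUnramified.isReduced_of_field (R ⧸ maximalIdeal R) _
  have hquot : (⊥ : Ideal (S ⧸ mS)).jacobson = ⊥ := by
    rw [IsArtinianRing.jacobson_eq_radical, ← Ideal.zero_eq_bot, ← nilradical, nilradical_eq_zero]
  calc (⊥ : Ideal S).jacobson = mS.jacobson :=
        le_antisymm (Ideal.jacobson_mono bot_le)
          (Ideal.jacobson_idem (I := (⊥ : Ideal S)) ▸ Ideal.jacobson_mono hmS)
    _ = mS := Ideal.jacobson_eq_iff_jacobson_quotient_eq_bot.mpr hquot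

end IsLocalRing

/-- `R(a₁^{1/2}, …, aₛ^{1/2})`. -/
abbrev AdjoinSqrts {R σ : Type*} [CommRing R] (a : σ → R) : Type _ :=
  MvPolynomial σ R ⧸ Ideal.span {p : MvPolynomial σ R | ∃ i, p = X i ^ 2 - C (a i)}

namespace AdjoinSqrts

variable {R σ : Type*} [CommRing R] (a : σ → R)

noncomputable def sqrt (i : σ) : AdjoinSqrts a := Ideal.Quotient.mk _ (X i)

theorem sqrt_sq (i : σ) : sqrt a i ^ 2 = algebraMap R _ (a i) := by
  rw [← sub_eq_zero, sqrt, ← map_pow, ← Ideal.Quotient.mk_algebraMap, ← map_sub,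
    Ideal.Quotient.eq_zero_iff_mem]
  exact Ideal.subset_span ⟨i, rfl⟩

theorem induction_on {P : AdjoinSqrts a → Prop} (y : AdjoinSqrts a)
    (algebraMap : ∀ r, P (algebraMap R _ r)) (add : ∀ y z, P y → P z → P (y + z))
    (mul_sqrt : ∀ y i, P y → P (y * sqrt a i)) : P y := by
  obtain ⟨p, rfl⟩ := Ideal.Quotient.mk_surjective y
  induction p using MvPolynomial.induction_on with
  | C r => exact algebraMap r
  | add p q hp hq => rw [map_add]; exact add _ _ hp hq
  | mul_X p i hp => rw [map_mul]; exact mul_sqrt _ i hp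

instance : Algebra.IsIntegral R (AdjoinSqrts a) where
  isIntegral y := by
    induction y using induction_on with
    | algebraMap r => exact isIntegral_algebraMap
    | add y z hy hz => exact hy.add hz
    | mul_sqrt y i hy =>
      exact hy.mul ⟨Polynomial.X ^ 2 - Polynomial.C (a i),
        Polynomial.monic_X_pow_sub_C _ two_ne_zero, by simp [sqrt_sq]⟩

instance [Finite σ] : Module.Finite R (AdjoinSqrts a) :=
  Algebra.IsIntegral.finite

theorem formallyUnramified (h2 : IsUnit (2 : R)) (ha : ∀ i, IsUnit (a i)) :
    Algebra.FormallyUnramified R (AdjoinSqrts a) := by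
  set D := KaehlerDifferential.D R (AdjoinSqrts a)
  have hD_sqrt (i : σ) : D (sqrt a i) = 0 := by
    have hx : IsUnit (sqrt a i) := (isUnit_pow_iff two_ne_zero).mp <|
      sqrt_sq a i ▸ (ha i).map _
    have h2x : IsUnit (2 * sqrt a i) :=
      (map_ofNat (algebraMap R (AdjoinSqrts a)) 2 ▸ h2.map (algebraMap R _)).mul hx
    have := D.leibniz_pow (sqrt a i) 2
    rw [sqrt_sq, D.map_algebraMap, pow_one, ← Nat.cast_smul_eq_nsmul (AdjoinSqrts a),
      smul_smul] at this
    exact h2x.smul_eq_zero.mp (by simpa using this.symm)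
  have hD (y : AdjoinSqrts a) : D y = 0 := by
    induction y using induction_on with
    | algebraMap r => exact D.map_algebraMap r
    | add y z hy hz => rw [D.map_add, hy, hz, add_zero]
    | mul_sqrt y i hy => rw [D.leibniz, hy, hD_sqrt, smul_zero, smul_zero, add_zero]
  have hspan : Submodule.span (AdjoinSqrts a) (Set.range D) = ⊥ :=
    Submodule.span_eq_bot.mpr (Set.forall_mem_range.mpr hD)
  rw [KaehlerDifferential.span_range_derivation] at hspan
  exact ⟨(Submodule.subsingleton_iff _).mp (subsingleton_iff_bot_eq_top.mp hspan.symm)⟩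

end AdjoinSqrts

/-- Let `F` be a field of characteristic not 2, `T` a commutative local `F`-algebra with maximal
ideal `M` and residue field `K = T/M`, and `a₁, ..., aₛ` units of `T`.  Then
`S = T[x₁,...,xₛ]/(x₁² - a₁, ..., xₛ² - aₛ)` is semilocal (finitely many maximal ideals) and its
Jacobson radical is `M·S`. -/
theorem adjoin_sqrts_semilocal_jacobson (F T : Type*) [Field F] (hF : (2 : F) ≠ 0)
    [CommRing T] [Algebra F T] [IsLocalRing T] (s : ℕ) (a : Fin s → Tˣ) :
    Finite (MaximalSpectrum (MvPolynomial (Fin s) T ⧸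
        Ideal.span {p : MvPolynomial (Fin s) T | ∃ i, p = X i ^ 2 - C (a i : T)})) ∧
      Ideal.jacobson (⊥ : Ideal (MvPolynomial (Fin s) T ⧸
          Ideal.span {p : MvPolynomial (Fin s) T | ∃ i, p = X i ^ 2 - C (a i : T)})) =
        Ideal.map (algebraMap T (MvPolynomial (Fin s) T ⧸
            Ideal.span {p : MvPolynomial (Fin s) T | ∃ i, p = X i ^ 2 - C (a i : T)}))
          (IsLocalRing.maximalIdeal T) := by
  have h2 : IsUnit (2 : T) :=
    map_ofNat (algebraMap F T) 2 ▸ (isUnit_iff_ne_zero.mpr hF).map (algebraMap F T)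
  have := AdjoinSqrts.formallyUnramified (fun i ↦ (a i : T)) h2 fun i ↦ (a i).isUnit
  exact ⟨IsLocalRing.finite_maximalSpectrum_of_finite (R := T),
    IsLocalRing.jacobson_bot_eq_map_maximalIdeal⟩
end

section
/- Let T be a commutative local ring in which 2 is invertible, with residue field K, and let a be a unit of T with image ā in K. Then S = T[x]/(x² - a) modulo its Jacobson radical is isomorphic to K[x]/(x² - ā). -/
open Polynomial IsLocalRing

/-!
`S` is finite over the local ring `T`, so every maximal ideal of `S` contracts to the maximal
ideal `𝔪` of `T`; hence `𝔪 S ⊆ J(S)`. Conversely `S / 𝔪 S ≅ K[x]/(x² - ā)`, and since `2` and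
`ā` are units of `K` the polynomial `x² - ā` is separable, so this quotient is a reduced Jacobson
ring and has zero Jacobson radical. Together, `J(S) = 𝔪 S`.
-/

theorem IsLocalRing.map_maximalIdeal_le_jacobson_bot {T S : Type*} [CommRing T] [IsLocalRing T]
    [CommRing S] [Algebra T S] [Algebra.IsIntegral T S] :
    (maximalIdeal T).map (algebraMap T S) ≤ (⊥ : Ideal S).jacobson :=
  le_sInf fun J ⟨_, hJ⟩ => Ideal.map_le_iff_le_comap.mpr
    (eq_maximalIdeal (Ideal.isMaximal_comap_of_isIntegral_of_isMaximal (R := T) J (hI := hJ))).ge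

theorem Ideal.jacobson_bot_eq_of_le_of_ringEquiv {S R : Type*} [CommRing S] [CommRing R]
    [IsJacobsonRing R] [IsReduced R] {I : Ideal S} (hI : I ≤ (⊥ : Ideal S).jacobson)
    (e : S ⧸ I ≃+* R) : (⊥ : Ideal S).jacobson = I := by
  have : IsReduced (S ⧸ I) := isReduced_of_injective e e.injective
  have : IsJacobsonRing (S ⧸ I) := (isJacobsonRing_iso e).mpr ‹_›
  have hjac : I.jacobson = I :=
    jacobson_eq_iff_jacobson_quotient_eq_bot.mpr (IsJacobsonRing.out' _ isRadical_bot)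
  exact le_antisymm (hjac ▸ jacobson_mono bot_le) hI

namespace AdjoinRoot

variable {K : Type*} [Field K]

instance isJacobsonRing (p : K[X]) : IsJacobsonRing (AdjoinRoot p) :=
  inferInstanceAs (IsJacobsonRing (K[X] ⧸ _))

theorem isReduced_of_squarefree {p : K[X]} (hp : Squarefree p) : IsReduced (AdjoinRoot p) :=
  (Ideal.isRadical_iff_quotient_reduced _).mp (isRadical_iff_span_singleton.mp hp.isRadical)

end AdjoinRoot

/-- Let `T` be a commutative local ring with `2` invertible and residue field `K`, and let `a` be
a unit of `T` with image `ā` in `K`.  Then `S = T[x]/(x² - a)` modulo its Jacobson radical is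
isomorphic to `K[x]/(x² - ā)`. -/
theorem adjoinRoot_mod_jacobson (T : Type*) [CommRing T] [IsLocalRing T]
    (h2 : IsUnit (2 : T)) (a : T) (ha : IsUnit a) :
    Nonempty
      ((AdjoinRoot (X ^ 2 - C a) ⧸ Ideal.jacobson (⊥ : Ideal (AdjoinRoot (X ^ 2 - C a)))) ≃+*
        AdjoinRoot (X ^ 2 - C (IsLocalRing.residue T a))) := by
  have hmap : (X ^ 2 - C a).map (residue T) = X ^ 2 - C (residue T a) := by simp
  have hsep : (X ^ 2 - C (residue T a)).Separable :=
    separable_X_pow_sub_C _ (by exact_mod_cast (h2.map (residue T)).ne_zero) (ha.map _).ne_zero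
  have := AdjoinRoot.isReduced_of_squarefree hsep.squarefree
  have : Module.Finite T (AdjoinRoot (X ^ 2 - C a)) :=
    (monic_X_pow_sub_C a two_ne_zero).finite_adjoinRoot
  let e := (AdjoinRoot.quotAdjoinRootEquivQuotPolynomialQuot (maximalIdeal T) _).trans
    (AdjoinRoot.algEquivOfEq T _ _ hmap).toRingEquiv
  have hjac := Ideal.jacobson_bot_eq_of_le_of_ringEquiv map_maximalIdeal_le_jacobson_bot e
  exact ⟨(Ideal.quotEquivOfEq hjac).trans e⟩
end

section
/- Let R be a commutative ring containing 1/2 and let a, b be units of R. Then (a,b)_R ⊗_R (a,b)_R is isomorphic to the matrix algebra M₄(R); in particular the class of (a,b)_R in the Brauer group of R has order dividing 2. -/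
open Quaternion TensorProduct MulOpposite

/-!
The sandwich map `ℍ ⊗ ℍᵐᵒᵖ → End_R ℍ`, `x ⊗ y ↦ (z ↦ x z y)`, is onto: `z ↦ a z + i z i` is
`2a` times the projection onto `R ⊕ R i`, and likewise for `j`, so `(a + i ⊗ i)(b + j ⊗ j)` acts
as `z ↦ 4ab · re z`. Since `re (i z) = a · imI z`, `re (j z) = b · imJ z` and
`re (k z) = -ab · imK z`, composing this with left multiplications gives every rank-one map
`z ↦ φ z • x` with `φ` a coordinate functional, and these span `End_R ℍ`. Both sides are free of
rank 16, so the sandwich map is bijective, i.e. `ℍ` is Azumaya. Conjugation identifies `ℍ` with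
`ℍᵐᵒᵖ` and a basis identifies `End_R ℍ` with `M₄(R)`.
-/

theorem AlgHom.mulLeftRight_bijective_of_surjective {R A : Type*} [CommRing R] [Ring A]
    [Algebra R A] [Module.Free R A] [Module.Finite R A]
    (h : Function.Surjective (AlgHom.mulLeftRight R A)) :
    Function.Bijective (AlgHom.mulLeftRight R A) := by
  cases subsingleton_or_nontrivial R
  · have : Subsingleton (A ⊗[R] Aᵐᵒᵖ) := Module.subsingleton R _
    exact ⟨Function.injective_of_subsingleton _, h⟩
  refine OrzechProperty.bijective_of_surjective_of_finrank_le
    (AlgHom.mulLeftRight R A).toLinearMap h ?_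
  rw [Module.finrank_tensorProduct, Module.finrank_linearMap, (opLinearEquiv R).finrank_eq.symm]

namespace QuaternionAlgebra

variable {R : Type*} [CommRing R]

theorem linearMap_eq_sum_smulRight {c₁ c₂ c₃ : R} (f : Module.End R ℍ[R,c₁,c₂,c₃]) :
    f = (reₗ c₁ c₂ c₃).smulRight (f 1) + (imIₗ c₁ c₂ c₃).smulRight (f ⟨0, 1, 0, 0⟩) +
      (imJₗ c₁ c₂ c₃).smulRight (f ⟨0, 0, 1, 0⟩) + (imKₗ c₁ c₂ c₃).smulRight (f ⟨0, 0, 0, 1⟩) := by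
  refine (basisOneIJK c₁ c₂ c₃).ext fun k => ?_
  fin_cases k <;> simp [basisOneIJK]; rfl

variable {a b : R}

theorem mulLeftRight_eq_smul_algebraMap_re :
    AlgHom.mulLeftRight R ℍ[R,a,b]
        ((a • 1 + ⟨0, 1, 0, 0⟩ ⊗ₜ op ⟨0, 1, 0, 0⟩) * (b • 1 + ⟨0, 0, 1, 0⟩ ⊗ₜ op ⟨0, 0, 1, 0⟩)) =
      (4 * a * b) • (Algebra.linearMap R ℍ[R,a,b] ∘ₗ reₗ a 0 b) := by
  ext z : 1
  simp only [map_mul, map_add, map_smul, map_one, Module.End.mul_apply, LinearMap.add_apply,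
    LinearMap.smul_apply, Module.End.one_apply, AlgHom.mulLeftRight_apply, unop_op,
    LinearMap.coe_comp, Function.comp_apply, reₗ_apply, Algebra.linearMap_apply, coe_algebraMap]
  ext <;> simp <;> ring

theorem mulLeftRight_surjective (h2 : IsUnit (2 : R)) (ha : IsUnit a) (hb : IsUnit b) :
    Function.Surjective (AlgHom.mulLeftRight R ℍ[R,a,b]) := by
  set S := (AlgHom.mulLeftRight R ℍ[R,a,b]).range
  have hre : Algebra.linearMap R ℍ[R,a,b] ∘ₗ reₗ a 0 b ∈ S := by
    have h4ab : IsUnit (4 * a * b) := by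
      rw [show (4 : R) = 2 * 2 by norm_num]
      exact ((h2.mul h2).mul ha).mul hb
    rw [← Subalgebra.mem_toSubmodule, ← Submodule.smul_mem_iff_of_isUnit _ h4ab,
      ← mulLeftRight_eq_smul_algebraMap_re]
    exact ⟨_, rfl⟩
  have hsmulRight (φ : ℍ[R,a,b] →ₗ[R] R) (c : R) (y x : ℍ[R,a,b]) (hc : IsUnit c)
      (hφ : ∀ z, c * φ z = (y * z).re) : φ.smulRight x ∈ S := by
    have : c • φ.smulRight x = AlgHom.mulLeftRight R _ (x ⊗ₜ 1) *
        (Algebra.linearMap R ℍ[R,a,b] ∘ₗ reₗ a 0 b) * AlgHom.mulLeftRight R _ (y ⊗ₜ 1) := by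
      ext z : 1
      simp [mul_coe_eq_smul, ← hφ, smul_comm c]
    rw [← Subalgebra.mem_toSubmodule, ← Submodule.smul_mem_iff_of_isUnit _ hc,
      Subalgebra.mem_toSubmodule, this]
    exact mul_mem (mul_mem ⟨_, rfl⟩ hre) ⟨_, rfl⟩
  intro f
  rw [← AlgHom.mem_range, linearMap_eq_sum_smulRight f]
  refine add_mem (add_mem (add_mem ?_ ?_) ?_) ?_
  · exact hsmulRight _ 1 1 _ isUnit_one fun z => by simp
  · exact hsmulRight _ a ⟨0, 1, 0, 0⟩ _ ha fun z => by simp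
  · exact hsmulRight _ b ⟨0, 0, 1, 0⟩ _ hb fun z => by simp
  · exact hsmulRight _ (-(a * b)) ⟨0, 0, 0, 1⟩ _ (ha.mul hb).neg fun z => by simp

theorem isAzumaya (h2 : IsUnit (2 : R)) (ha : IsUnit a) (hb : IsUnit b) :
    IsAzumaya R ℍ[R,a,b] where
  eq_of_smul_eq_smul {r s} h := by simpa using congr_arg re (h 1)
  bij := AlgHom.mulLeftRight_bijective_of_surjective (mulLeftRight_surjective h2 ha hb)

end QuaternionAlgebra

/-- For a commutative ring `R` containing `1/2` and units `a`, `b`, the tensor product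
`(a,b)_R ⊗_R (a,b)_R` is isomorphic to the matrix algebra `M₄(R)`; in particular the class of
`(a,b)_R` in the Brauer group of `R` has order dividing 2. -/
theorem quaternionAlgebra_tensor_self_iso_matrix (R : Type*) [CommRing R]
    (h2 : IsUnit (2 : R)) (a b : R) (ha : IsUnit a) (hb : IsUnit b) :
    Nonempty ((TensorProduct R ℍ[R, a, b] ℍ[R, a, b]) ≃ₐ[R] Matrix (Fin 4) (Fin 4) R) :=
  have := QuaternionAlgebra.isAzumaya h2 ha hb
  ⟨(Algebra.TensorProduct.congr AlgEquiv.refl QuaternionAlgebra.starAe).trans <|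
    (AlgEquiv.ofBijective _ IsAzumaya.bij).trans <|
      LinearMap.toMatrixAlgEquiv (QuaternionAlgebra.basisOneIJK a 0 b)⟩
end

section
/- Let T be a commutative ring, A an Azumaya T-algebra, and e a nonzero idempotent of A such that eAe ⊗_T κ(m) ≠ 0 for every maximal ideal m of T. Then eAe is an Azumaya T-algebra Brauer equivalent to A. -/
open TensorProduct

/-- The canonical map `A ⊗_R Aᵐᵒᵖ →ₗ[R] End_R A`, `a ⊗ bᵒᵖ ↦ (x ↦ a * x * b)`. -/
noncomputable def azumayaMap (R A : Type*) [CommRing R] [Ring A] [Algebra R A] :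
    A ⊗[R] Aᵐᵒᵖ →ₗ[R] Module.End R A :=
  TensorProduct.lift <|
    LinearMap.mk₂ R
      (fun a b => (LinearMap.mulLeft R a).comp (LinearMap.mulRight R (MulOpposite.unop b)))
      (fun a a' b => by ext x; simp [add_mul])
      (fun r a b => by ext x; simp [smul_mul_assoc])
      (fun a b b' => by ext x; simp [mul_add])
      (fun r a b => by ext x; simp [mul_smul_comm])

/-- An `R`-algebra `A` is Azumaya if it is a finitely generated projective faithful `R`-module
and the natural map `A ⊗_R Aᵐᵒᵖ → End_R A` is bijective. -/
def IsAzumayaAlgebra (R A : Type*) [CommRing R] [Ring A] [Algebra R A] : Prop :=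
  Module.Finite R A ∧ Module.Projective R A ∧ FaithfulSMul R A ∧
    Function.Bijective (azumayaMap R A)

variable {A : Type*} [Ring A]

/-- The corner ring `eAe` of a ring `A` at an idempotent `e`. -/
@[ext]
structure Corner (e : A) (he : IsIdempotentElem e) where
  /-- the underlying element of `A` -/
  val : A
  /-- membership in the corner `eAe` -/
  property : e * val * e = val

namespace Corner

variable {e : A} {he : IsIdempotentElem e}

theorem e_mul (he : IsIdempotentElem e) {a : A} (ha : e * a * e = a) : e * a = a := by
  conv_lhs => rw [← ha]
  rw [← mul_assoc, ← mul_assoc, he.eq, ha]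

theorem mul_e (he : IsIdempotentElem e) {a : A} (ha : e * a * e = a) : a * e = a := by
  conv_lhs => rw [← ha]
  rw [mul_assoc, mul_assoc, he.eq, ← mul_assoc, ha]

instance : Zero (Corner e he) := ⟨⟨0, by simp⟩⟩
instance : Add (Corner e he) :=
  ⟨fun x y => ⟨x.val + y.val, by rw [mul_add, add_mul, x.property, y.property]⟩⟩
instance : Neg (Corner e he) := ⟨fun x => ⟨-x.val, by rw [mul_neg, neg_mul, x.property]⟩⟩
instance : One (Corner e he) := ⟨⟨e, by rw [he.eq, he.eq]⟩⟩
instance : Mul (Corner e he) :=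
  ⟨fun x y => ⟨x.val * y.val, by
    conv_rhs => rw [← e_mul he x.property, ← mul_e he y.property]
    simp [mul_assoc]⟩⟩

instance : Ring (Corner e he) :=
  Ring.ofMinimalAxioms
    (fun a b c => Corner.ext (add_assoc a.val b.val c.val))
    (fun a => Corner.ext (zero_add a.val))
    (fun a => Corner.ext (neg_add_cancel a.val))
    (fun a b c => Corner.ext (mul_assoc a.val b.val c.val))
    (fun a => Corner.ext (e_mul he a.property))
    (fun a => Corner.ext (mul_e he a.property))
    (fun a b c => Corner.ext (mul_add a.val b.val c.val))
    (fun a b c => Corner.ext (add_mul a.val b.val c.val))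

variable (T : Type*) [CommRing T] [Algebra T A]

theorem mem_corner_algebraMap (he : IsIdempotentElem e) (t : T) :
    e * (algebraMap T A t * e) * e = algebraMap T A t * e := by
  rw [mul_assoc, mul_assoc, he.eq, ← mul_assoc, ← Algebra.commutes t e, mul_assoc, he.eq]

/-- The corner ring `eAe` is a `T`-algebra when `A` is. -/
noncomputable instance : Algebra T (Corner e he) :=
  RingHom.toAlgebra'
    { toFun := fun t => (⟨algebraMap T A t * e, mem_corner_algebraMap T he t⟩ : Corner e he)
      map_one' := by
        apply Corner.ext
        exact (by simp : algebraMap T A 1 * e = e)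
      map_mul' := fun s t => by
        apply Corner.ext
        exact (by
          rw [map_mul, mul_assoc (algebraMap T A s) e, ← mul_assoc e (algebraMap T A t) e,
            ← Algebra.commutes t e, mul_assoc (algebraMap T A t) e e, he.eq, mul_assoc] :
          algebraMap T A (s * t) * e = (algebraMap T A s * e) * (algebraMap T A t * e))
      map_zero' := by
        apply Corner.ext
        exact (by simp : algebraMap T A 0 * e = 0)
      map_add' := fun s t => by
        apply Corner.ext
        exact (by rw [map_add, add_mul] :
          algebraMap T A (s + t) * e = algebraMap T A s * e + algebraMap T A t * e) }
    (fun c x => by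
      apply Corner.ext
      exact (by
        rw [mul_assoc, e_mul he x.property, ← mul_assoc, ← Algebra.commutes c x.val,
          mul_assoc, mul_e he x.property] :
        algebraMap T A c * e * x.val = x.val * (algebraMap T A c * e)))

end Corner

/-! The corner `eAe` and the left ideal `Ae` are direct summands of `A` (split by `x ↦ e * x * e`
and `x ↦ x * e`), so they are finitely generated projective, and the multiplication maps
`eAe ⊗ (eAe)ᵒᵖ → End(eAe)` and `A ⊗ (eAe)ᵒᵖ → End(Ae)` are retracts of the bijection
`A ⊗ Aᵒᵖ → End(A)`, hence bijective. A projective module whose fibres at all maximal ideals are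
nonzero has trace ideal `T`, so it is faithful. Then
`eAe ⊗ End(Ae) ≅ eAe ⊗ A ⊗ (eAe)ᵒᵖ ≅ A ⊗ End(eAe)`. -/

open MulOpposite

lemma azumayaMap_eq_mulLeftRight (R B : Type*) [CommRing R] [Ring B] [Algebra R B] :
    azumayaMap R B = (AlgHom.mulLeftRight R B).toLinearMap := by
  refine TensorProduct.ext' fun a b => ?_
  ext x
  simp [azumayaMap, mul_assoc]

lemma isAzumayaAlgebra_iff (R B : Type*) [CommRing R] [Ring B] [Algebra R B] :
    IsAzumayaAlgebra R B ↔ IsAzumaya R B := by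
  rw [IsAzumayaAlgebra, azumayaMap_eq_mulLeftRight, AlgHom.coe_toLinearMap]
  exact ⟨fun ⟨_, _, _, h⟩ => ⟨h⟩, fun h => ⟨h.toFinite, h.toProjective, h.toFaithfulSMul, h.bij⟩⟩

theorem Function.Bijective.of_retract {α β γ δ : Type*} {F : α → β} (hF : Function.Bijective F)
    {G : γ → δ} {j : γ → α} {r : α → γ} {k : δ → β} {s : β → δ}
    (hrj : ∀ x, r (j x) = x) (hsk : ∀ y, s (k y) = y)
    (hFj : ∀ x, F (j x) = k (G x)) (hGr : ∀ x, G (r x) = s (F x)) :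
    Function.Bijective G := by
  refine ⟨fun x y hxy => ?_, fun y => ?_⟩
  · have hjxy : j x = j y := hF.1 (by rw [hFj, hFj, hxy])
    rw [← hrj x, ← hrj y, hjxy]
  · obtain ⟨z, hz⟩ := hF.2 (k y)
    exact ⟨r z, by rw [hGr, hz, hsk]⟩

namespace Module

variable (R M : Type*) [CommRing R] [AddCommGroup M] [Module R M]

def traceIdeal : Ideal R := Ideal.span {r | ∃ (f : Dual R M) (x : M), f x = r}

variable {R M}

lemma mul_eq_zero_of_mem_traceIdeal {r u : R} (hr : ∀ x : M, r • x = 0)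
    (hu : u ∈ traceIdeal R M) : r * u = 0 := by
  induction hu using Submodule.span_induction with
  | mem _ h =>
    obtain ⟨f, x, rfl⟩ := h
    rw [← smul_eq_mul, ← map_smul, hr, map_zero]
  | zero => rw [mul_zero]
  | add _ _ _ _ h₁ h₂ => rw [mul_add, h₁, h₂, add_zero]
  | smul s _ _ h => rw [smul_eq_mul, mul_left_comm, h, mul_zero]

lemma faithfulSMul_of_traceIdeal_eq_top (h : traceIdeal R M = ⊤) : FaithfulSMul R M := by
  refine ⟨fun {r s} hrs => sub_eq_zero.1 ?_⟩
  have h1 : (1 : R) ∈ traceIdeal R M := h ▸ Submodule.mem_top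
  simpa only [mul_one] using
    mul_eq_zero_of_mem_traceIdeal (fun x => by rw [sub_smul, hrs, sub_self]) h1

lemma traceIdeal_smul_top [Projective R M] : traceIdeal R M • (⊤ : Submodule R M) = ⊤ := by
  obtain ⟨s, hs⟩ := projective_def'.1 ‹Projective R M›
  refine eq_top_iff.2 fun x _ => ?_
  rw [← LinearMap.id_apply (R := R) x, ← hs, LinearMap.comp_apply,
    Finsupp.linearCombination_apply]
  refine Submodule.sum_mem _ fun a _ => Submodule.smul_mem_smul ?_ trivial
  exact Ideal.subset_span ⟨Finsupp.lapply a ∘ₗ s, x, rfl⟩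

lemma traceIdeal_eq_top [Projective R M]
    (h : ∀ m : MaximalSpectrum R, Nontrivial (M ⊗[R] (R ⧸ m.asIdeal))) :
    traceIdeal R M = ⊤ := by
  by_contra hne
  obtain ⟨m, hm, hle⟩ := Ideal.exists_le_maximal _ hne
  have hmM : m • (⊤ : Submodule R M) = ⊤ :=
    top_le_iff.1 ((traceIdeal_smul_top (R := R)).symm.trans_le (Submodule.smul_mono_left hle))
  have := h ⟨m, hm⟩
  have := (TensorProduct.tensorQuotEquivQuotSMul M m).symm.toEquiv.nontrivial
  exact not_subsingleton _ (Submodule.Quotient.subsingleton_iff.2 hmM)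

lemma faithfulSMul_of_nontrivial_tensor_residue [Projective R M]
    (h : ∀ m : MaximalSpectrum R, Nontrivial (M ⊗[R] (R ⧸ m.asIdeal))) : FaithfulSMul R M :=
  faithfulSMul_of_traceIdeal_eq_top (traceIdeal_eq_top h)

end Module

section LinearMaps

variable {R M N : Type*} [CommRing R] [AddCommGroup M] [Module R M] [AddCommGroup N] [Module R N]

def LinearMap.mulOpposite (f : M →ₗ[R] N) : Mᵐᵒᵖ →ₗ[R] Nᵐᵒᵖ :=
  (opLinearEquiv R).toLinearMap ∘ₗ f ∘ₗ (opLinearEquiv R).symm.toLinearMap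

@[simp] lemma LinearMap.mulOpposite_apply (f : M →ₗ[R] N) (x : Mᵐᵒᵖ) :
    f.mulOpposite x = op (f x.unop) := rfl

def Module.End.sandwich (u : M →ₗ[R] N) (v : N →ₗ[R] M) : Module.End R M →ₗ[R] Module.End R N :=
  LinearMap.compRight R u ∘ₗ LinearMap.lcomp R M v

@[simp] lemma Module.End.sandwich_apply (u : M →ₗ[R] N) (v : N →ₗ[R] M) (g : Module.End R M)
    (x : N) : Module.End.sandwich u v g x = u (g (v x)) := rfl

lemma Module.End.sandwich_sandwich {u : M →ₗ[R] N} {v : N →ₗ[R] M} (h : v ∘ₗ u = LinearMap.id)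
    (g : Module.End R M) : sandwich v u (sandwich u v g) = g := by
  ext x
  simp [← LinearMap.comp_apply v u, h]

end LinearMaps

namespace Corner

section Retract

variable {T : Type*} [CommRing T] [Algebra T A] {e : A} {he : IsIdempotentElem e}

@[simp] lemma val_add (x y : Corner e he) : (x + y).val = x.val + y.val := rfl
@[simp] lemma val_mul (x y : Corner e he) : (x * y).val = x.val * y.val := rfl
@[simp] lemma val_one : (1 : Corner e he).val = e := rfl

@[simp] lemma e_mul_val (x : Corner e he) : e * x.val = x.val := e_mul he x.property
@[simp] lemma val_mul_e (x : Corner e he) : x.val * e = x.val := mul_e he x.property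

@[simp] lemma e_mul_val_mul (x : Corner e he) (a : A) : e * (x.val * a) = x.val * a := by
  rw [← mul_assoc, e_mul_val]

@[simp] lemma val_mul_e_mul (x : Corner e he) (a : A) : x.val * (e * a) = x.val * a := by
  rw [← mul_assoc, val_mul_e]

@[simp] lemma val_smul (t : T) (x : Corner e he) : (t • x).val = t • x.val := by
  change algebraMap T A t * e * x.val = _
  rw [mul_assoc, e_mul_val, ← Algebra.smul_def]

variable (T he)

def subtype : Corner e he →ₗ[T] A where
  toFun := val
  map_add' _ _ := rfl
  map_smul' := val_smul

def proj : A →ₗ[T] Corner e he where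
  toFun a := ⟨e * a * e, by rw [← mul_assoc, ← mul_assoc, he.eq, mul_assoc, he.eq]⟩
  map_add' a b := Corner.ext (by simp [mul_add, add_mul])
  map_smul' t a := Corner.ext (by simp [mul_assoc])

@[simp] lemma subtype_apply (x : Corner e he) : subtype T he x = x.val := rfl
@[simp] lemma proj_apply_val (a : A) : (proj T he a).val = e * a * e := rfl
@[simp] lemma proj_val (x : Corner e he) : proj T he x.val = x := Corner.ext x.property

lemma proj_comp_subtype : proj T he ∘ₗ subtype T he = LinearMap.id :=
  LinearMap.ext (proj_val T he)

instance [Module.Finite T A] : Module.Finite T (Corner e he) :=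
  Module.Finite.of_surjective (proj T he) fun x => ⟨x.val, proj_val T he x⟩

instance [Module.Projective T A] : Module.Projective T (Corner e he) :=
  Module.Projective.of_split (subtype T he) (proj T he) (proj_comp_subtype T he)

variable {T}

lemma mulLeftRight_bijective (hA : Function.Bijective (AlgHom.mulLeftRight T A)) :
    Function.Bijective (AlgHom.mulLeftRight T (Corner e he)) := by
  refine hA.of_retract (j := TensorProduct.map (subtype T he) (subtype T he).mulOpposite)
    (r := TensorProduct.map (proj T he) (proj T he).mulOpposite)
    (k := Module.End.sandwich (subtype T he) (proj T he))
    (s := Module.End.sandwich (proj T he) (subtype T he))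
    (fun x => ?_) (Module.End.sandwich_sandwich (proj_comp_subtype T he))
    (fun x => ?_) (fun x => ?_)
  · induction x using TensorProduct.induction_on with
    | zero => simp
    | tmul c d => simp
    | add x y hx hy => simp only [map_add, hx, hy]
  · induction x using TensorProduct.induction_on with
    | zero => simp
    | tmul c d =>
      ext a
      simp [mul_assoc]
    | add x y hx hy => simp only [map_add, hx, hy]
  · induction x using TensorProduct.induction_on with
    | zero => simp
    | tmul a b =>
      ext c
      simp [mul_assoc]
    | add x y hx hy => simp only [map_add, hx, hy]

end Retract

section LeftIdeal

variable (T : Type*) [CommRing T] [Algebra T A] (e : A)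

def leftIdeal : Submodule T A where
  carrier := {x | x * e = x}
  add_mem' {a b} (ha : a * e = a) (hb : b * e = b) := show (a + b) * e = a + b by
    rw [add_mul, ha, hb]
  zero_mem' := zero_mul e
  smul_mem' t a (ha : a * e = a) := show (t • a) * e = t • a by rw [smul_mul_assoc, ha]

variable {T e}

@[simp] lemma val_mul_e_of_mem_leftIdeal (q : leftIdeal T e) : q.val * e = q.val := q.prop

@[simp] lemma val_mul_e_mul_of_mem_leftIdeal (q : leftIdeal T e) (a : A) :
    q.val * (e * a) = q.val * a := by
  rw [← mul_assoc, val_mul_e_of_mem_leftIdeal]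

variable (T) (he : IsIdempotentElem e)

def leftIdealProj : A →ₗ[T] leftIdeal T e :=
  LinearMap.codRestrict _ (LinearMap.mulRight T e) fun x =>
    show x * e * e = x * e by rw [mul_assoc, he.eq]

@[simp] lemma leftIdealProj_apply_val (x : A) : (leftIdealProj T he x).val = x * e := rfl

lemma leftIdealProj_comp_subtype :
    leftIdealProj T he ∘ₗ (leftIdeal T e).subtype = LinearMap.id :=
  LinearMap.ext fun q => Subtype.ext (val_mul_e_of_mem_leftIdeal q)

lemma finite_leftIdeal (he : IsIdempotentElem e) [Module.Finite T A] :
    Module.Finite T (leftIdeal T e) :=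
  Module.Finite.of_surjective (leftIdealProj T he)
    fun q => ⟨q.val, LinearMap.congr_fun (leftIdealProj_comp_subtype T he) q⟩

lemma projective_leftIdeal (he : IsIdempotentElem e) [Module.Projective T A] :
    Module.Projective T (leftIdeal T e) :=
  Module.Projective.of_split (leftIdeal T e).subtype _ (leftIdealProj_comp_subtype T he)

noncomputable def toLeftIdeal : Corner e he →ₗ[T] leftIdeal T e :=
  LinearMap.codRestrict _ (subtype T he) val_mul_e

lemma faithfulSMul_leftIdeal [FaithfulSMul T (Corner e he)] :
    FaithfulSMul T (leftIdeal T e) := by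
  have hinj : Function.Injective (toLeftIdeal T he) := fun x y h =>
    Corner.ext (congrArg Subtype.val h)
  have hC : Module.annihilator T (Corner e he) = ⊥ := Module.annihilator_eq_bot.2 ‹_›
  exact Module.annihilator_eq_bot.1
    (eq_bot_iff.2 ((LinearMap.annihilator_le_of_injective _ hinj).trans hC.le))

def leftIdealMulLeftRightEnd (a : A) (c : Corner e he) : Module.End T (leftIdeal T e) where
  toFun q := ⟨a * q.val * c.val, show _ * e = _ by rw [mul_assoc _ c.val, val_mul_e]⟩
  map_add' _ _ := Subtype.ext (by simp [mul_add, add_mul])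
  map_smul' _ _ := Subtype.ext (by simp)

@[simp] lemma leftIdealMulLeftRightEnd_apply (a : A) (c : Corner e he) (q : leftIdeal T e) :
    (leftIdealMulLeftRightEnd T he a c q).val = a * q.val * c.val := rfl

noncomputable def leftIdealMulLeftRight :
    A ⊗[T] (Corner e he)ᵐᵒᵖ →ₐ[T] Module.End T (leftIdeal T e) :=
  Algebra.TensorProduct.algHomOfLinearMapTensorProduct
    (TensorProduct.lift <| LinearMap.mk₂ T (fun a c => leftIdealMulLeftRightEnd T he a c.unop)
      (fun a a' c => by ext q; simp [add_mul])
      (fun t a c => by ext q; simp)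
      (fun a c c' => by ext q; simp [mul_add])
      (fun t a c => by ext q; simp))
    (fun a₁ a₂ c₁ c₂ => by ext q; simp [mul_assoc])
    (by ext q; simp)

@[simp] lemma leftIdealMulLeftRight_apply (a : A) (c : (Corner e he)ᵐᵒᵖ) (q : leftIdeal T e) :
    (leftIdealMulLeftRight T he (a ⊗ₜ c) q).val = a * q.val * c.unop.val := rfl

variable {T}

lemma leftIdealMulLeftRight_bijective (hA : Function.Bijective (AlgHom.mulLeftRight T A)) :
    Function.Bijective (leftIdealMulLeftRight T he) := by
  refine hA.of_retract (j := TensorProduct.map LinearMap.id (subtype T he).mulOpposite)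
    (r := TensorProduct.map LinearMap.id (proj T he).mulOpposite)
    (k := Module.End.sandwich (leftIdeal T e).subtype (leftIdealProj T he))
    (s := Module.End.sandwich (leftIdealProj T he) (leftIdeal T e).subtype)
    (fun x => ?_) (Module.End.sandwich_sandwich (leftIdealProj_comp_subtype T he))
    (fun x => ?_) (fun x => ?_)
  · induction x using TensorProduct.induction_on with
    | zero => simp
    | tmul a c => simp
    | add x y hx hy => simp only [map_add, hx, hy]
  · induction x using TensorProduct.induction_on with
    | zero => simp
    | tmul a c =>
      ext x
      simp [mul_assoc]
    | add x y hx hy => simp only [map_add, hx, hy]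
  · induction x using TensorProduct.induction_on with
    | zero => simp
    | tmul a b =>
      ext q
      simp [mul_assoc]
    | add x y hx hy => simp only [map_add, hx, hy]

end LeftIdeal

lemma isAzumaya {T : Type*} [CommRing T] [Algebra T A] [IsAzumaya T A] {e : A}
    (he : IsIdempotentElem e)
    (hres : ∀ m : MaximalSpectrum T, Nontrivial (Corner e he ⊗[T] (T ⧸ m.asIdeal))) :
    IsAzumaya T (Corner e he) :=
  have := Module.faithfulSMul_of_nontrivial_tensor_residue hres
  ⟨mulLeftRight_bijective he IsAzumaya.bij⟩

end Corner

noncomputable def tensorEndEquivOfEquivEnd {R B C P Q : Type*} [CommRing R] [Ring B] [Algebra R B]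
    [Ring C] [Algebra R C] [AddCommGroup P] [Module R P] [AddCommGroup Q] [Module R Q]
    (eP : B ⊗[R] Cᵐᵒᵖ ≃ₐ[R] Module.End R P) (eQ : C ⊗[R] Cᵐᵒᵖ ≃ₐ[R] Module.End R Q) :
    C ⊗[R] Module.End R P ≃ₐ[R] B ⊗[R] Module.End R Q :=
  (Algebra.TensorProduct.congr AlgEquiv.refl eP.symm).trans <|
    (Algebra.TensorProduct.assoc R R R C B Cᵐᵒᵖ).symm.trans <|
    (Algebra.TensorProduct.congr (Algebra.TensorProduct.comm R C B) AlgEquiv.refl).trans <|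
    (Algebra.TensorProduct.assoc R R R B C Cᵐᵒᵖ).trans <|
    Algebra.TensorProduct.congr AlgEquiv.refl eQ

theorem corner_azumaya_brauer_equivalent_general {T : Type u} {A : Type w} [CommRing T] [Ring A]
    [Algebra T A] (hA : IsAzumayaAlgebra T A) (e : A) (he : IsIdempotentElem e)
    (hres : ∀ m : MaximalSpectrum T,
      Nontrivial ((Corner e he) ⊗[T] (T ⧸ m.asIdeal))) :
    IsAzumayaAlgebra T (Corner e he) ∧
      ∃ (P : Type w) (_ : AddCommGroup P) (_ : Module T P)
        (Q : Type w) (_ : AddCommGroup Q) (_ : Module T Q),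
        Module.Finite T P ∧ Module.Projective T P ∧ FaithfulSMul T P ∧
        Module.Finite T Q ∧ Module.Projective T Q ∧ FaithfulSMul T Q ∧
        Nonempty (((Corner e he) ⊗[T] Module.End T P) ≃ₐ[T] (A ⊗[T] Module.End T Q)) := by
  rw [isAzumayaAlgebra_iff] at hA ⊢
  have hC := Corner.isAzumaya he hres
  have hAe := Corner.leftIdealMulLeftRight_bijective he hA.bij
  exact ⟨hC, Corner.leftIdeal T e, _, _, Corner e he, _, _,
    Corner.finite_leftIdeal T he, Corner.projective_leftIdeal T he,
    Corner.faithfulSMul_leftIdeal T he, inferInstance, inferInstance, inferInstance,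
    ⟨tensorEndEquivOfEquivEnd (.ofBijective _ hAe) (.ofBijective _ hC.bij)⟩⟩

/-- Let `T` be a commutative ring, `A` an Azumaya `T`-algebra, and `e` a nonzero idempotent of
`A` such that `eAe ⊗_T κ(m) ≠ 0` for every maximal ideal `m` of `T`.  Then `eAe` is an Azumaya
`T`-algebra Brauer equivalent to `A`: there are faithful finitely generated projective
`T`-modules `P`, `Q` with `eAe ⊗_T End_T(P) ≅ A ⊗_T End_T(Q)`. -/
theorem corner_azumaya_brauer_equivalent {T : Type u} {A : Type w} [CommRing T] [Ring A]
    [Algebra T A] (hA : IsAzumayaAlgebra T A) (e : A) (he : IsIdempotentElem e) (hne : e ≠ 0)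
    (hres : ∀ m : MaximalSpectrum T,
      Nontrivial ((Corner e he) ⊗[T] (T ⧸ m.asIdeal))) :
    IsAzumayaAlgebra T (Corner e he) ∧
      ∃ (P : Type w) (_ : AddCommGroup P) (_ : Module T P)
        (Q : Type w) (_ : AddCommGroup Q) (_ : Module T Q),
        Module.Finite T P ∧ Module.Projective T P ∧ FaithfulSMul T P ∧
        Module.Finite T Q ∧ Module.Projective T Q ∧ FaithfulSMul T Q ∧
        Nonempty (((Corner e he) ⊗[T] Module.End T P) ≃ₐ[T] (A ⊗[T] Module.End T Q)) :=
  corner_azumaya_brauer_equivalent_general hA e he hres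
end

section
/- Let K be a field of characteristic not 2, let L = K(√a₁) be a quadratic field extension of K, and let x₂, x₃ ∈ L*, a₂, a₃ ∈ K*. Suppose the quaternion algebras (a₂, N_{L/K}(x₂))_K and (a₃, N_{L/K}(x₃))_K are isomorphic. Then there exists y ∈ K* such that (a₂, N_{L/K}(x₂))_K ≅ (y, N_{L/K}(x₂))_K and (y, N_{L/K}(x₃))_K ≅ (a₃, N_{L/K}(x₃))_K. -/
/-!
If `b` is a square, `(a, b)` is split: the form `a (x² - b z²)` takes every nonzero value, so
`(a, b) ≅ (a', b)` and `y = a'` works. Otherwise, in characteristic `≠ 2` the pure quaternions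
are intrinsic (an element with scalar square is scalar or pure), so `φ : (a, b) ≅ (a', b')` maps
pure quaternions to pure quaternions. The planes `K i + K k` and `φ⁻¹ (K i' + K k')` both lie in
the `3`-dimensional space of pure quaternions of `(a, b)`, hence meet in some `q = x i + z k ≠ 0`.
Such `q` anticommutes with `j` and `q² = y := a (x² - b z²)`, which is nonzero because `b` is not
a square; so `q, j` is a quaternion basis of type `(y, b)`, and likewise `φ q, j'` is one of type
`(y, b')`.
-/

open Quaternion

theorem Algebra.norm_ne_zero_of_ne_zero {K L : Type*} [Field K] [Field L] [Algebra K L] {x : L}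
    (hx : x ≠ 0) : Algebra.norm K x ≠ 0 := by
  by_cases hfin : Module.Finite K L
  · exact Algebra.norm_ne_zero_iff.2 hx
  · rw [Algebra.norm_eq_one_of_not_module_finite hfin]
    exact one_ne_zero

theorem Module.Dual.not_linearIndependent_of_forall_eq_zero {K V ι : Type*} [Field K]
    [AddCommGroup V] [Module K V] [Fintype ι] [Nonempty ι] {v : ι → V} {f : Module.Dual K V}
    (hf : f ≠ 0) (hv : ∀ i, f (v i) = 0) (hcard : Fintype.card ι = Module.finrank K V) :
    ¬LinearIndependent K v := fun hli ↦ hf <| by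
  have hspan : Submodule.span K (Set.range v) ≤ LinearMap.ker f :=
    Submodule.span_le.2 (Set.range_subset_iff.2 hv)
  rw [hli.span_eq_top_of_card_eq_finrank hcard, top_le_iff, LinearMap.ker_eq_top] at hspan
  exact hspan

theorem sq_sub_mul_sq_ne_zero {K : Type*} [Field K] {b x z : K} (hb : ¬IsSquare b)
    (hxz : x ≠ 0 ∨ z ≠ 0) : x ^ 2 - b * z ^ 2 ≠ 0 := by
  intro h
  by_cases hz : z = 0
  · simp_all
  · exact hb ⟨x / z, by field_simp; linear_combination -h⟩

namespace QuaternionAlgebra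

section CommRing

variable {R : Type*} [CommRing R] {a b : R}

theorem mk_zero_mul_self (x z : R) :
    (⟨0, x, 0, z⟩ : ℍ[R, a, b]) * ⟨0, x, 0, z⟩ = ↑(a * (x ^ 2 - b * z ^ 2)) := by
  ext <;> simp only [mk_mul_mk, re_coe, imI_coe, imJ_coe, imK_coe] <;> ring

theorem mul_self_eq_coe_of_re_eq_zero {w : ℍ[R, a, b]} (hw : w.re = 0) :
    w * w = ↑(w * w).re := by
  ext <;> simp [hw] <;> ring

end CommRing

variable {K : Type*} [Field K] {a b a' b' : K}

theorem re_eq_zero_or_eq_coe_re_of_mul_self_eq_coe (hK : (2 : K) ≠ 0) {w : ℍ[K, a, b]} {c : K}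
    (h : w * w = ↑c) : w.re = 0 ∨ w = ↑w.re := by
  refine or_iff_not_imp_left.2 fun hre ↦ ?_
  have key : ∀ t : K, 2 * w.re * t = 0 → t = 0 := fun t ht ↦
    (mul_eq_zero.1 ht).resolve_left (mul_ne_zero hK hre)
  have hi := congrArg imI h
  have hj := congrArg imJ h
  have hk := congrArg imK h
  simp only [imI_mul, imJ_mul, imK_mul, imI_coe, imJ_coe, imK_coe] at hi hj hk
  ext
  · rfl
  · exact key _ (by linear_combination hi)
  · exact key _ (by linear_combination hj)
  · exact key _ (by linear_combination hk)

theorem re_map_eq_zero (hK : (2 : K) ≠ 0) (φ : ℍ[K, a, b] ≃ₐ[K] ℍ[K, a', b'])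
    {w : ℍ[K, a, b]} (hw : w.re = 0) : (φ w).re = 0 := by
  have hsq : φ w * φ w = ↑(w * w).re := by
    rw [← map_mul, mul_self_eq_coe_of_re_eq_zero hw]
    exact φ.commutes _
  refine (re_eq_zero_or_eq_coe_re_of_mul_self_eq_coe hK hsq).elim id fun hcoe ↦ ?_
  have : w = ↑(φ w).re := φ.injective (hcoe.trans (φ.commutes _).symm)
  exact (congrArg re this).symm.trans hw

theorem nonempty_algEquiv_of_mul_sq_sub_eq {y : K} (x z : K) (hy : a * (x ^ 2 - b * z ^ 2) = y)
    (hy0 : y ≠ 0) : Nonempty (ℍ[K, y, b] ≃ₐ[K] ℍ[K, a, b]) := by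
  subst hy
  obtain ⟨ha, hd⟩ := mul_ne_zero_iff.1 hy0
  let B : Basis ℍ[K, a, b] (a * (x ^ 2 - b * z ^ 2)) 0 b :=
    { i := ⟨0, x, 0, z⟩
      j := ⟨0, 0, 1, 0⟩
      k := ⟨0, b * z, 0, x⟩
      i_mul_i := by ext <;> simp <;> ring
      j_mul_j := by ext <;> simp
      i_mul_j := by ext <;> simp
      j_mul_i := by ext <;> simp }
  let B' : Basis ℍ[K, a * (x ^ 2 - b * z ^ 2), b] a 0 b :=
    { i := ⟨0, x / (x ^ 2 - b * z ^ 2), 0, -z / (x ^ 2 - b * z ^ 2)⟩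
      j := ⟨0, 0, 1, 0⟩
      k := ⟨0, -(b * z) / (x ^ 2 - b * z ^ 2), 0, x / (x ^ 2 - b * z ^ 2)⟩
      i_mul_i := by ext <;> simp; field_simp; ring
      j_mul_j := by ext <;> simp
      i_mul_j := by ext <;> simp; ring
      j_mul_i := by ext <;> simp; ring }
  refine ⟨AlgEquiv.ofAlgHom B.liftHom B'.liftHom ?_ ?_⟩
  · ext <;> simp [B, B', Basis.lift] <;> field_simp <;> ring
  · ext <;> simp [B, B', Basis.lift] <;> field_simp <;> ring

theorem nonempty_algEquiv_of_isSquare (hK : (2 : K) ≠ 0) (ha : a ≠ 0) (hb : IsSquare b)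
    (hb0 : b ≠ 0) {y : K} (hy : y ≠ 0) : Nonempty (ℍ[K, y, b] ≃ₐ[K] ℍ[K, a, b]) := by
  obtain ⟨c, rfl⟩ := hb
  have hc : c ≠ 0 := by rintro rfl; simp at hb0
  -- `x ^ 2 - c ^ 2 * z ^ 2 = (x - c * z) * (x + c * z)`; take the factors `1` and `y / a`
  refine nonempty_algEquiv_of_mul_sq_sub_eq ((1 + y / a) / 2) ((y / a - 1) / (2 * c)) ?_ hy
  field_simp
  ring

theorem exists_map_mk_zero_eq_mk_zero (hK : (2 : K) ≠ 0) (φ : ℍ[K, a, b] ≃ₐ[K] ℍ[K, a', b']) :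
    ∃ x z x' z' : K, (x ≠ 0 ∨ z ≠ 0) ∧ φ ⟨0, x, 0, z⟩ = ⟨0, x', 0, z'⟩ := by
  have hdep : ¬LinearIndependent K ![(⟨0, 1, 0, 0⟩ : ℍ[K, a, b]), ⟨0, 0, 0, 1⟩,
      φ.symm ⟨0, 1, 0, 0⟩, φ.symm ⟨0, 0, 0, 1⟩] := by
    refine Module.Dual.not_linearIndependent_of_forall_eq_zero (f := reₗ a 0 b) ?_ ?_ ?_
    · exact fun h ↦ one_ne_zero (congrArg (· 1) h)
    · intro i
      fin_cases i <;> simp [re_map_eq_zero hK φ.symm]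
    · simp [finrank_eq_four]
  obtain ⟨g, hg, i, hi⟩ := Fintype.not_linearIndependent_iff.1 hdep
  simp only [Fin.sum_univ_four, Matrix.cons_val, smul_mk, smul_eq_mul, mul_zero, mul_one,
    mk_add_mk, add_zero] at hg
  have hφ : φ ⟨0, g 0, 0, g 1⟩ = ⟨0, -g 2, 0, -g 3⟩ := by
    have h := congrArg φ hg
    simp only [map_add, map_smul, AlgEquiv.apply_symm_apply, map_zero] at h
    rw [← sub_eq_zero, ← h]
    ext <;> simp
  refine ⟨g 0, g 1, -g 2, -g 3, not_and_or.1 fun h01 ↦ ?_, hφ⟩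
  have h0 : (⟨0, -g 2, 0, -g 3⟩ : ℍ[K, a', b']) = 0 := by
    rw [← hφ, h01.1, h01.2, ← map_zero φ]
    rfl
  have h2 : g 2 = 0 := neg_eq_zero.1 (congrArg imI h0)
  have h3 : g 3 = 0 := neg_eq_zero.1 (congrArg imK h0)
  fin_cases i <;> simp_all

theorem exists_common_slot (hK : (2 : K) ≠ 0) (ha : a ≠ 0) (hb : b ≠ 0) (ha' : a' ≠ 0)
    (φ : ℍ[K, a, b] ≃ₐ[K] ℍ[K, a', b']) :
    ∃ y : K, y ≠ 0 ∧ Nonempty (ℍ[K, a, b] ≃ₐ[K] ℍ[K, y, b]) ∧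
      Nonempty (ℍ[K, y, b'] ≃ₐ[K] ℍ[K, a', b']) := by
  by_cases hsq : IsSquare b
  · exact ⟨a', ha', (nonempty_algEquiv_of_isSquare hK ha hsq hb ha').map AlgEquiv.symm,
      ⟨AlgEquiv.refl⟩⟩
  obtain ⟨x, z, x', z', hxz, hφ⟩ := exists_map_mk_zero_eq_mk_zero hK φ
  have hy : a * (x ^ 2 - b * z ^ 2) ≠ 0 := mul_ne_zero ha (sq_sub_mul_sq_ne_zero hsq hxz)
  have hy' : a' * (x' ^ 2 - b' * z' ^ 2) = a * (x ^ 2 - b * z ^ 2) := by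
    apply coe_injective (c₁ := a') (c₂ := 0) (c₃ := b')
    rw [← mk_zero_mul_self, ← hφ, ← map_mul, mk_zero_mul_self]
    exact φ.commutes _
  exact ⟨_, hy, (nonempty_algEquiv_of_mul_sq_sub_eq x z rfl hy).map AlgEquiv.symm,
    nonempty_algEquiv_of_mul_sq_sub_eq x' z' hy' hy⟩

end QuaternionAlgebra

theorem quaternion_common_slot_general (K L : Type*) [Field K] [Field L] [Algebra K L]
    (hK : (2 : K) ≠ 0)
    (x₂ x₃ : L) (hx₂ : x₂ ≠ 0)
    (a₂ a₃ : K) (ha₂ : a₂ ≠ 0) (ha₃ : a₃ ≠ 0)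
    (h : Nonempty (ℍ[K, a₂, Algebra.norm K x₂] ≃ₐ[K] ℍ[K, a₃, Algebra.norm K x₃])) :
    ∃ y : K, y ≠ 0 ∧
      Nonempty (ℍ[K, a₂, Algebra.norm K x₂] ≃ₐ[K] ℍ[K, y, Algebra.norm K x₂]) ∧
      Nonempty (ℍ[K, y, Algebra.norm K x₃] ≃ₐ[K] ℍ[K, a₃, Algebra.norm K x₃]) :=
  h.elim <| QuaternionAlgebra.exists_common_slot hK ha₂ (Algebra.norm_ne_zero_of_ne_zero hx₂) ha₃

/-- Common slot lemma setup: `K` a field of characteristic ≠ 2, `L = K(√a₁)` a quadratic field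
extension, `x₂ x₃ ∈ L*`, `a₂ a₃ ∈ K*`.  If `(a₂, N(x₂))_K ≅ (a₃, N(x₃))_K` then there is
`y ∈ K*` with `(a₂, N(x₂))_K ≅ (y, N(x₂))_K` and `(y, N(x₃))_K ≅ (a₃, N(x₃))_K`. -/
theorem quaternion_common_slot (K L : Type*) [Field K] [Field L] [Algebra K L]
    (hK : (2 : K) ≠ 0) (a₁ : K) (ha₁ : a₁ ≠ 0)
    (hquad : Module.finrank K L = 2) (α : L) (hα : α * α = algebraMap K L a₁)
    (x₂ x₃ : L) (hx₂ : x₂ ≠ 0) (hx₃ : x₃ ≠ 0)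
    (a₂ a₃ : K) (ha₂ : a₂ ≠ 0) (ha₃ : a₃ ≠ 0)
    (h : Nonempty (ℍ[K, a₂, Algebra.norm K x₂] ≃ₐ[K] ℍ[K, a₃, Algebra.norm K x₃])) :
    ∃ y : K, y ≠ 0 ∧
      Nonempty (ℍ[K, a₂, Algebra.norm K x₂] ≃ₐ[K] ℍ[K, y, Algebra.norm K x₂]) ∧
      Nonempty (ℍ[K, y, Algebra.norm K x₃] ≃ₐ[K] ℍ[K, a₃, Algebra.norm K x₃]) :=
  quaternion_common_slot_general K L hK x₂ x₃ hx₂ a₂ a₃ ha₂ ha₃ h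
end

section
/- Let K be a field of characteristic not 2 and a, b, c ∈ K*. If the quaternion algebras (a,b)_K and (a,c)_K are isomorphic, then bc is a norm from K(√a), i.e., bc = u² - a v² for some u, v ∈ K. -/
/-!
An isomorphism `φ : (a,b)_K ≃ (a,c)_K` carries the generators `i, j` to anticommuting pure
quaternions `P = x i + y j + z k`, `Q = p i + q j + r k` of `(a,c)_K` with `P² = a`, `Q² = b`.
With `β = y + z√a`, `γ = q + r√a` and `N` the norm of `K(√a)`, these relations read
`c N(β) = a (1 - x²)`, `b = a p² + c N(γ)` and `a x p + c Re(β γ̄) = 0`, and multiplicativity of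
`N` turns them into `b c N(β) = (a p)² - a (c Im(β γ̄))²`. So `bc` is a norm when `N(β) ≠ 0`;
otherwise either `a` is a square, and every element is a norm, or `β = 0`, and then `p = 0` and
`bc = N(cγ)`.
-/

open Quaternion

section

variable {K : Type*} [Field K]

def IsNormFromSqrt (a n : K) : Prop :=
  ∃ u v : K, n = u ^ 2 - a * v ^ 2

namespace IsNormFromSqrt

variable {a m n : K}

theorem of_isSquare (h2 : (2 : K) ≠ 0) (ha : IsSquare a) (ha0 : a ≠ 0) (n : K) :
    IsNormFromSqrt a n := by
  obtain ⟨d, rfl⟩ := ha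
  have hd : d ≠ 0 := by rintro rfl; simp at ha0
  exact ⟨(n + 1) / 2, (n - 1) / (2 * d), by field_simp; ring⟩

theorem mul (hm : IsNormFromSqrt a m) (hn : IsNormFromSqrt a n) : IsNormFromSqrt a (m * n) := by
  obtain ⟨u, v, rfl⟩ := hm
  obtain ⟨s, t, rfl⟩ := hn
  exact ⟨u * s + a * v * t, u * t + v * s, by ring⟩

theorem inv (hn : IsNormFromSqrt a n) : IsNormFromSqrt a n⁻¹ := by
  obtain ⟨u, v, rfl⟩ := hn
  by_cases h : u ^ 2 - a * v ^ 2 = 0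
  · exact ⟨0, 0, by simp [h]⟩
  · exact ⟨u / (u ^ 2 - a * v ^ 2), v / (u ^ 2 - a * v ^ 2), by field_simp⟩

theorem of_mul_right (hmn : IsNormFromSqrt a (m * n)) (hn : IsNormFromSqrt a n) (hn0 : n ≠ 0) :
    IsNormFromSqrt a m := by
  simpa [hn0] using hmn.mul hn.inv

end IsNormFromSqrt

theorem eq_zero_of_sq_sub_mul_sq_eq_zero {a y z : K} (ha : ¬IsSquare a)
    (h : y ^ 2 - a * z ^ 2 = 0) : y = 0 ∧ z = 0 := by
  have hz : z = 0 := by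
    by_contra hz
    exact ha ⟨y / z, by field_simp; linear_combination -h⟩
  subst hz
  exact ⟨by simpa using h, rfl⟩

theorem isNormFromSqrt_mul_of_orthogonal (h2 : (2 : K) ≠ 0)
    {a b c x y z p q r : K} (hP : a * x ^ 2 + c * y ^ 2 - a * c * z ^ 2 = a)
    (hQ : a * p ^ 2 + c * q ^ 2 - a * c * r ^ 2 = b)
    (hPQ : a * x * p + c * y * q - a * c * z * r = 0) : IsNormFromSqrt a (b * c) := by
  rcases eq_or_ne a 0 with rfl | ha0
  · exact ⟨c * q, 0, by linear_combination c * hQ.symm⟩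
  by_cases hβ : y ^ 2 - a * z ^ 2 = 0
  · by_cases ha : IsSquare a
    · exact .of_isSquare h2 ha ha0 _
    obtain ⟨rfl, rfl⟩ := eq_zero_of_sq_sub_mul_sq_eq_zero ha hβ
    have hx : x ≠ 0 := by rintro rfl; exact ha0 (by simpa using hP.symm)
    have hp : p = 0 := by simpa [ha0, hx] using hPQ
    exact ⟨c * q, c * r, by subst hp; linear_combination c * hQ.symm⟩
  · -- `N(β) N(γ) = Re(β γ̄)² - a Im(β γ̄)²`, rewritten with `hP`, `hQ`, `hPQ`
    have key : b * (1 - x ^ 2) = a * p ^ 2 - c ^ 2 * (z * q - y * r) ^ 2 := by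
      refine mul_left_cancel₀ ha0 ?_
      linear_combination (-(b - a * p ^ 2)) * hP - (c * (y ^ 2 - a * z ^ 2)) * hQ +
        (c * (y * q - a * z * r) - a * x * p) * hPQ
    refine .of_mul_right (n := y ^ 2 - a * z ^ 2)
      ⟨a * p, c * (z * q - y * r), ?_⟩ ⟨y, z, by ring⟩ hβ
    linear_combination a * key + b * hP

end

namespace QuaternionAlgebra

theorem re_eq_zero_of_mul_self_eq_coe {R : Type*} [CommRing R] [NoZeroDivisors R] {c₁ c₃ : R}
    (h2 : (2 : R) ≠ 0) {x : ℍ[R,c₁,0,c₃]} {s : R} (hx : x * x = s) (him : x.im ≠ 0) :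
    x.re = 0 := by
  by_contra hre
  have hI := congrArg imI hx
  have hJ := congrArg imJ hx
  have hK := congrArg imK hx
  simp only [imI_mul, imJ_mul, imK_mul, imI_coe, imJ_coe, imK_coe, zero_mul, add_zero] at hI hJ hK
  have h2re : 2 * x.re ≠ 0 := mul_ne_zero h2 hre
  apply him
  ext
  · exact re_im x
  · rw [imI_im, imI_zero]
    exact (mul_eq_zero.1 (by linear_combination hI)).resolve_left h2re
  · rw [imJ_im, imJ_zero]
    exact (mul_eq_zero.1 (by linear_combination hJ)).resolve_left h2re
  · rw [imK_im, imK_zero]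
    exact (mul_eq_zero.1 (by linear_combination hK)).resolve_left h2re

theorem im_map_ne_zero {R : Type*} [CommRing R] {a₁ a₂ a₃ b₁ b₂ b₃ : R}
    (φ : ℍ[R,a₁,a₂,a₃] ≃ₐ[R] ℍ[R,b₁,b₂,b₃]) {x : ℍ[R,a₁,a₂,a₃]} (hx : x.im ≠ 0) :
    (φ x).im ≠ 0 := by
  intro h
  have : x = (φ x).re := φ.injective <| by
    rw [← coe_algebraMap, φ.commutes, coe_algebraMap]
    conv_lhs => rw [← re_add_im (φ x), h, add_zero]
  exact hx (this ▸ im_coe _)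

theorem Basis.isNormFromSqrt_mul {K : Type*} [Field K] (h2 : (2 : K) ≠ 0) {a b c : K}
    (q : Basis ℍ[K,a,c] a 0 b) (hi : q.i.im ≠ 0) (hj : q.j.im ≠ 0) :
    IsNormFromSqrt a (b * c) := by
  have hii : q.i * q.i = a := by rw [q.i_mul_i]; ext <;> simp
  have hjj : q.j * q.j = b := by rw [q.j_mul_j]; ext <;> simp
  have hij : q.i * q.j + q.j * q.i = 0 := by rw [q.i_mul_j, q.j_mul_i]; simp
  have hi0 := re_eq_zero_of_mul_self_eq_coe h2 hii hi
  have hj0 := re_eq_zero_of_mul_self_eq_coe h2 hjj hj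
  have hP := congrArg re hii
  have hQ := congrArg re hjj
  have hPQ := congrArg re hij
  simp only [re_add, re_mul, re_coe, re_zero, hi0, hj0] at hP hQ hPQ
  refine isNormFromSqrt_mul_of_orthogonal h2 (x := q.i.imI) (y := q.i.imJ) (z := q.i.imK)
    (p := q.j.imI) (q := q.j.imJ) (r := q.j.imK) ?_ ?_ ?_
  · linear_combination hP
  · linear_combination hQ
  · exact (mul_eq_zero.1 (by linear_combination hPQ)).resolve_left h2

end QuaternionAlgebra

theorem quaternionAlgebra_iso_mul_isNorm_general (K : Type*) [Field K] (hK : (2 : K) ≠ 0)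
    (a b c : K)
    (h : Nonempty (ℍ[K, a, b] ≃ₐ[K] ℍ[K, a, c])) :
    ∃ u v : K, b * c = u ^ 2 - a * v ^ 2 := by
  obtain ⟨φ⟩ := h
  refine ((QuaternionAlgebra.Basis.self K).compHom φ.toAlgHom).isNormFromSqrt_mul hK
    (QuaternionAlgebra.im_map_ne_zero φ ?_) (QuaternionAlgebra.im_map_ne_zero φ ?_) <;>
  simp [QuaternionAlgebra.Basis.self, QuaternionAlgebra.ext_iff]

/-- If `K` is a field of characteristic not 2, `a b c ∈ K*`, and the quaternion algebras
`(a,b)_K` and `(a,c)_K` are isomorphic, then `bc` is a norm from `K(√a)`: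
`bc = u² - a·v²` for some `u v ∈ K`. -/
theorem quaternionAlgebra_iso_mul_isNorm (K : Type*) [Field K] (hK : (2 : K) ≠ 0)
    (a b c : K) (ha : a ≠ 0) (hb : b ≠ 0) (hc : c ≠ 0)
    (h : Nonempty (ℍ[K, a, b] ≃ₐ[K] ℍ[K, a, c])) :
    ∃ u v : K, b * c = u ^ 2 - a * v ^ 2 :=
  quaternionAlgebra_iso_mul_isNorm_general K hK a b c h
end
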